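/- arXiv:2107.11374 — 3 statements merged into one kernel-verified Lean document; each statement's English description precedes it below -/
import Mathlib

section
/- The group G = ℤ_q ⋊_n ℤ_p has exactly p + (q − 1)/p conjugacy classes. -/
/-- The underlying set of the semidirect product `ℤ_q ⋊_n ℤ_p`. -/
def MS (p q : ℕ) (_n : ℕ) : Type := ZMod q × ZMod p

namespace MS

variable {p q n : ℕ}

/-- The element `a^l b^k = (l, k)` of `ℤ_q ⋊_n ℤ_p`. -/
def mk (l : ZMod q) (k : ZMod p) : MS p q n := (l, k)

/-- The `ℤ/qℤ`-component of an element of `ℤ_q ⋊_n ℤ_p`. -/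
def fst (g : MS p q n) : ZMod q := g.1

/-- The `ℤ/pℤ`-component of an element of `ℤ_q ⋊_n ℤ_p`. -/
def snd (g : MS p q n) : ZMod p := g.2

/-- The group structure of the semidirect product `ℤ_q ⋊_n ℤ_p`, with multiplication
`(l,k)·(l′,k′) = (l + n^k l′, k + k′)`, where `n` has multiplicative order `p` mod `q`. -/
instance instGroup [NeZero p] [hn : Fact (orderOf (n : ZMod q) = p)] :
    Group (MS p q n) where
  mul g h := ((g.1 + (n : ZMod q) ^ g.2.val * h.1, g.2 + h.2) : ZMod q × ZMod p)
  one := ((0, 0) : ZMod q × ZMod p)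
  inv g := ((-((n : ZMod q) ^ (-g.2).val * g.1), -g.2) : ZMod q × ZMod p)
  mul_assoc := by
    have h1 : (n : ZMod q) ^ p = 1 := by rw [← hn.out]; exact pow_orderOf_eq_one _
    have key : ∀ k₁ k₂ : ZMod p,
        (n : ZMod q) ^ (k₁ + k₂).val = (n : ZMod q) ^ k₁.val * (n : ZMod q) ^ k₂.val := by
      intro k₁ k₂
      have h2 : k₁.val + k₂.val = (k₁ + k₂).val + p * ((k₁.val + k₂.val) / p) := by
        rw [ZMod.val_add]; exact (Nat.mod_add_div _ _).symm
      rw [← pow_add, h2, pow_add, pow_mul, h1, one_pow, mul_one]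
    rintro ⟨l₁, k₁⟩ ⟨l₂, k₂⟩ ⟨l₃, k₃⟩
    show ((l₁ + (n : ZMod q) ^ k₁.val * l₂) + (n : ZMod q) ^ (k₁ + k₂).val * l₃,
        (k₁ + k₂) + k₃) =
      (l₁ + (n : ZMod q) ^ k₁.val * (l₂ + (n : ZMod q) ^ k₂.val * l₃), k₁ + (k₂ + k₃))
    rw [key]
    exact Prod.ext (by ring) (add_assoc _ _ _)
  one_mul := by
    rintro ⟨l, k⟩
    show ((0 : ZMod q) + (n : ZMod q) ^ (0 : ZMod p).val * l, (0 : ZMod p) + k) = (l, k)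
    rw [ZMod.val_zero, pow_zero, one_mul, zero_add, zero_add]
  mul_one := by
    rintro ⟨l, k⟩
    show (l + (n : ZMod q) ^ k.val * (0 : ZMod q), k + (0 : ZMod p)) = (l, k)
    rw [mul_zero, add_zero, add_zero]
  inv_mul_cancel := by
    rintro ⟨l, k⟩
    show (-((n : ZMod q) ^ (-k).val * l) + (n : ZMod q) ^ (-k).val * l, -k + k)
      = ((0, 0) : ZMod q × ZMod p)
    rw [neg_add_cancel, neg_add_cancel]

instance [NeZero p] [NeZero q] : Fintype (MS p q n) :=
  inferInstanceAs (Fintype (ZMod q × ZMod p))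

end MS


namespace MSAux

variable {p q n : ℕ}

section Pow

variable [NeZero p] [hn : Fact (orderOf (n : ZMod q) = p)]

lemma hpow1 : (n : ZMod q) ^ p = 1 := by
  rw [← hn.out]; exact pow_orderOf_eq_one _

lemma key (k₁ k₂ : ZMod p) :
    (n : ZMod q) ^ (k₁ + k₂).val = (n : ZMod q) ^ k₁.val * (n : ZMod q) ^ k₂.val := by
  have h1 : (n : ZMod q) ^ p = 1 := hpow1
  have h2 : k₁.val + k₂.val = (k₁ + k₂).val + p * ((k₁.val + k₂.val) / p) := by
    rw [ZMod.val_add]; exact (Nat.mod_add_div _ _).symm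
  rw [← pow_add, h2, pow_add, pow_mul, h1, one_pow, mul_one]

lemma pow_val_natCast (j : ℕ) :
    (n : ZMod q) ^ ((j : ZMod p)).val = (n : ZMod q) ^ j := by
  have h1 : (n : ZMod q) ^ p = 1 := hpow1
  conv_rhs => rw [← Nat.mod_add_div j p]
  rw [pow_add, pow_mul, h1, one_pow, mul_one, ZMod.val_natCast]

lemma mul_def (g h : MS p q n) :
    g * h = ((g.1 + (n : ZMod q) ^ g.2.val * h.1, g.2 + h.2) : ZMod q × ZMod p) := rfl

lemma inv_def (g : MS p q n) :
    g⁻¹ = ((-((n : ZMod q) ^ (-g.2).val * g.1), -g.2) : ZMod q × ZMod p) := rfl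

lemma conj_eq (m l : ZMod q) (j k : ZMod p) :
    (MS.mk m j : MS p q n) * MS.mk l k * (MS.mk m j)⁻¹ =
      MS.mk ((1 - (n : ZMod q) ^ k.val) * m + (n : ZMod q) ^ j.val * l) k := by
  have h2 : (n : ZMod q) ^ (j + k).val * (n : ZMod q) ^ (-j).val = (n : ZMod q) ^ k.val := by
    rw [← key (j + k) (-j)]
    congr 1
    ring_nf
  show ((m + (n : ZMod q) ^ j.val * l) + (n : ZMod q) ^ (j + k).val *
      (-((n : ZMod q) ^ (-j).val * m)), (j + k) + (-j)) =
    (((1 - (n : ZMod q) ^ k.val) * m + (n : ZMod q) ^ j.val * l, k) : ZMod q × ZMod p)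
  refine Prod.ext ?_ (by ring)
  show (m + (n : ZMod q) ^ j.val * l) + (n : ZMod q) ^ (j + k).val *
      (-((n : ZMod q) ^ (-j).val * m)) = (1 - (n : ZMod q) ^ k.val) * m + (n : ZMod q) ^ j.val * l
  linear_combination (-m) * h2

end Pow

/-- The setoid on `ZMod q` whose classes are the orbits of multiplication by `n`. -/
def nSetoid (p q n : ℕ) (hp : 0 < p) (h1 : (n : ZMod q) ^ p = 1) : Setoid (ZMod q) where
  r l l' := ∃ j : ℕ, l' = (n : ZMod q) ^ j * l
  iseqv := by
    obtain ⟨m, rfl⟩ := Nat.exists_eq_succ_of_ne_zero hp.ne'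
    refine ⟨fun l => ⟨0, by simp⟩, ?_, ?_⟩
    · rintro l l' ⟨j, rfl⟩
      refine ⟨j * m, ?_⟩
      rw [← mul_assoc, ← pow_add]
      have : j * m + j = (m + 1) * j := by ring
      rw [this, pow_mul, h1, one_pow, one_mul]
    · rintro l l' l'' ⟨j, rfl⟩ ⟨j', rfl⟩
      exact ⟨j' + j, by rw [pow_add, mul_assoc]⟩

lemma card_quotient_nSetoid (p q n : ℕ) [Fact q.Prime] (hp : 0 < p)
    (hord : orderOf (n : ZMod q) = p) (h1 : (n : ZMod q) ^ p = 1) :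
    Nat.card (Quotient (nSetoid p q n hp h1)) = (q - 1) / p + 1 := by
  have hfin : IsOfFinOrder (n : ZMod q) := orderOf_pos_iff.mp (hord ▸ hp)
  set u : (ZMod q)ˣ := hfin.unit with hu_def
  have hu_coe : (u : ZMod q) = n := rfl
  have hufin : IsOfFinOrder u := by
    rw [← orderOf_pos_iff, ← orderOf_units, hu_coe, hord]; exact hp
  have hmem : ∀ x y : (ZMod q)ˣ, x⁻¹ * y ∈ Subgroup.zpowers u ↔
      ∃ j : ℕ, (y : ZMod q) = (n : ZMod q) ^ j * (x : ZMod q) := by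
    intro x y
    rw [← hufin.mem_powers_iff_mem_zpowers, Submonoid.mem_powers_iff]
    constructor
    · rintro ⟨j, hj⟩
      refine ⟨j, ?_⟩
      have : y = x * u ^ j := by rw [hj]; group
      rw [this, Units.val_mul, Units.val_pow_eq_pow_val, hu_coe, mul_comm]
    · rintro ⟨j, hj⟩
      refine ⟨j, Units.ext ?_⟩
      have hx : (x : ZMod q) ≠ 0 := Units.ne_zero x
      rw [Units.val_mul, Units.val_pow_eq_pow_val, hu_coe, hj, Units.val_inv_eq_inv_val,
        mul_comm ((n : ZMod q) ^ j) (x : ZMod q), ← mul_assoc, inv_mul_cancel₀ hx, one_mul]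
  classical
  let C := (ZMod q)ˣ ⧸ Subgroup.zpowers u
  let f : ZMod q → Option C := fun l =>
    if h : l = 0 then none else some (QuotientGroup.mk (Units.mk0 l h))
  have hf : ∀ l l', (nSetoid p q n hp h1).r l l' → f l = f l' := by
    rintro l l' ⟨j, rfl⟩
    by_cases h : l = 0
    · subst h; simp [f]
    · have hn0 : (n : ZMod q) ≠ 0 := by
        intro h0
        exact one_ne_zero (by rw [← h1, h0, zero_pow hp.ne'] : (1 : ZMod q) = 0)
      have h' : (n : ZMod q) ^ j * l ≠ 0 := mul_ne_zero (pow_ne_zero _ hn0) h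
      simp only [f, dif_neg h, dif_neg h']
      refine congrArg some ?_
      refine (QuotientGroup.eq).mpr ?_
      rw [hmem]
      exact ⟨j, by simp⟩
  let F : Quotient (nSetoid p q n hp h1) → Option C := Quotient.lift f hf
  let g0 : (ZMod q)ˣ → Quotient (nSetoid p q n hp h1) :=
    fun x => Quotient.mk _ (x : ZMod q)
  have hg : ∀ x y : (ZMod q)ˣ, (QuotientGroup.leftRel (Subgroup.zpowers u)) x y → g0 x = g0 y := by
    intro x y hxy
    rw [QuotientGroup.leftRel_apply] at hxy
    obtain ⟨j, hj⟩ := (hmem x y).mp hxy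
    exact Quotient.sound ⟨j, hj⟩
  let Ginv : Option C → Quotient (nSetoid p q n hp h1) :=
    fun o => o.elim (Quotient.mk _ 0) (Quotient.lift g0 hg)
  have hbij : Function.Bijective F := by
    constructor
    · intro z w
      induction z using Quotient.ind
      induction w using Quotient.ind
      rename_i l l'
      intro hF
      simp only [F, Quotient.lift_mk, f] at hF
      by_cases h : l = 0 <;> by_cases h' : l' = 0
      · subst h; subst h'; rfl
      · rw [dif_pos h, dif_neg h'] at hF; exact absurd hF (by simp)
      · rw [dif_neg h, dif_pos h'] at hF; exact absurd hF (by simp)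
      · rw [dif_neg h, dif_neg h'] at hF
        have := QuotientGroup.eq.mp (Option.some_injective _ hF)
        obtain ⟨j, hj⟩ := (hmem _ _).mp this
        exact Quotient.sound ⟨j, by simpa using hj⟩
    · intro o
      match o with
      | none => exact ⟨Quotient.mk _ 0, by simp [F, f]⟩
      | some c =>
        induction c using Quotient.ind
        rename_i x
        refine ⟨Quotient.mk _ (x : ZMod q), ?_⟩
        simp only [F, Quotient.lift_mk, f, dif_neg (Units.ne_zero x)]
        refine congrArg some (congrArg _ (Units.ext rfl))
  have hcardC : Nat.card C = (q - 1) / p := by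
    have h1' : Nat.card (ZMod q)ˣ = Nat.card C * Nat.card (Subgroup.zpowers u) :=
      Subgroup.card_eq_card_quotient_mul_card_subgroup _
    have h2' : Nat.card (Subgroup.zpowers u) = p := by
      rw [Nat.card_zpowers, ← orderOf_units, hu_coe, hord]
    have h3' : Nat.card (ZMod q)ˣ = q - 1 := by
      rw [Nat.card_eq_fintype_card, ZMod.card_units]
    rw [h2', h3'] at h1'
    exact (Nat.div_eq_of_eq_mul_left hp h1').symm
  have : Nat.card (Quotient (nSetoid p q n hp h1)) = Nat.card (Option C) :=
    Nat.card_congr (Equiv.ofBijective F hbij)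
  rw [this, Finite.card_option, hcardC]

/-- Conjugation invariant for `MS p q n`. -/
def Phi (p q n : ℕ) (hp : 0 < p) (h1 : (n : ZMod q) ^ p = 1) (g : ZMod q × ZMod p) :
    Quotient (nSetoid p q n hp h1) ⊕ {k : ZMod p // k ≠ 0} :=
  if h : g.2 = 0 then Sum.inl (Quotient.mk _ g.1) else Sum.inr ⟨g.2, h⟩

lemma Phi_zero (p q n : ℕ) (hp : 0 < p) (h1 : (n : ZMod q) ^ p = 1) (l : ZMod q) :
    Phi p q n hp h1 (l, 0) = Sum.inl (Quotient.mk _ l) := dif_pos rfl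

lemma Phi_ne (p q n : ℕ) (hp : 0 < p) (h1 : (n : ZMod q) ^ p = 1) (l : ZMod q)
    {k : ZMod p} (hk : k ≠ 0) :
    Phi p q n hp h1 (l, k) = Sum.inr ⟨k, hk⟩ := dif_neg hk

end MSAux

/-- The group `G = ℤ_q ⋊_n ℤ_p` has exactly `p + (q − 1)/p` conjugacy classes. -/
theorem card_conjClasses_MS (p q n : ℕ) [Fact p.Prime] [Fact q.Prime]
    (hp : Odd p) (hq : Odd q) (hpq : p ∣ q - 1)
    [Fact (orderOf (n : ZMod q) = p)] :
    Nat.card (ConjClasses (MS p q n)) = p + (q - 1) / p := by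
  classical
  have hppos : 0 < p := (Fact.out : p.Prime).pos
  have hord : orderOf (n : ZMod q) = p := Fact.out
  have h1 : (n : ZMod q) ^ p = 1 := MSAux.hpow1
  have hΦ : ∀ a b : MS p q n, IsConj a b →
      MSAux.Phi p q n hppos h1 a = MSAux.Phi p q n hppos h1 b := by
    rintro ⟨l, k⟩ ⟨l', k'⟩ hab
    obtain ⟨c, hc⟩ := isConj_iff.mp hab
    obtain ⟨m, j⟩ := c
    rw [show ((m, j) : MS p q n) = MS.mk m j from rfl,
      show (((l, k) : ZMod q × ZMod p) : MS p q n) = MS.mk l k from rfl,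
      MSAux.conj_eq] at hc
    have hc1 : (1 - (n : ZMod q) ^ k.val) * m + (n : ZMod q) ^ j.val * l = l' :=
      congrArg Prod.fst hc
    have hc2 : k = k' := congrArg Prod.snd hc
    subst hc2
    by_cases hk : k = 0
    · subst hk
      rw [ZMod.val_zero, pow_zero, sub_self, zero_mul, zero_add] at hc1
      rw [MSAux.Phi_zero, MSAux.Phi_zero]
      exact congrArg Sum.inl (Quotient.sound ⟨j.val, hc1.symm⟩)
    · rw [MSAux.Phi_ne p q n hppos h1 l hk, MSAux.Phi_ne p q n hppos h1 l' hk]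
  let F : ConjClasses (MS p q n) → _ := Quotient.lift (MSAux.Phi p q n hppos h1) hΦ
  have hF : ∀ g : MS p q n, F (ConjClasses.mk g) = MSAux.Phi p q n hppos h1 g := fun _ => rfl
  have hbij : Function.Bijective F := by
    constructor
    · intro z w h
      obtain ⟨⟨l, k⟩, rfl⟩ := ConjClasses.mk_surjective z
      obtain ⟨⟨l', k'⟩, rfl⟩ := ConjClasses.mk_surjective w
      have h' : MSAux.Phi p q n hppos h1 (l, k) = MSAux.Phi p q n hppos h1 (l', k') := h
      refine ConjClasses.mk_eq_mk_iff_isConj.mpr ?_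
      by_cases hk : k = 0 <;> by_cases hk' : k' = 0
      · subst hk; subst hk'
        rw [MSAux.Phi_zero, MSAux.Phi_zero] at h'
        obtain ⟨j, hj⟩ := Quotient.exact (Sum.inl_injective h')
        refine isConj_iff.mpr ⟨MS.mk 0 (j : ZMod p), ?_⟩
        rw [show (((l, (0 : ZMod p)) : ZMod q × ZMod p) : MS p q n) = MS.mk l 0 from rfl,
          MSAux.conj_eq]
        refine Prod.ext ?_ rfl
        show (1 - (n : ZMod q) ^ (0 : ZMod p).val) * 0 + (n : ZMod q) ^ ((j : ZMod p)).val * l = l'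
        rw [mul_zero, zero_add, MSAux.pow_val_natCast]
        exact hj.symm
      · subst hk
        rw [MSAux.Phi_zero, MSAux.Phi_ne p q n hppos h1 l' hk'] at h'
        exact absurd h' (by simp)
      · subst hk'
        rw [MSAux.Phi_ne p q n hppos h1 l hk, MSAux.Phi_zero] at h'
        exact absurd h' (by simp)
      · rw [MSAux.Phi_ne p q n hppos h1 l hk, MSAux.Phi_ne p q n hppos h1 l' hk'] at h'
        have hkk' : k = k' := congrArg Subtype.val (Sum.inr_injective h')
        subst hkk'
        have hkv : k.val ≠ 0 := fun h0 => hk ((ZMod.val_eq_zero k).mp h0)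
        have hne1 : (n : ZMod q) ^ k.val ≠ 1 := by
          intro he
          have hd := orderOf_dvd_of_pow_eq_one he
          rw [hord] at hd
          exact absurd (Nat.le_of_dvd (Nat.pos_of_ne_zero hkv) hd)
            (not_le.mpr (ZMod.val_lt k))
        have hne : (1 : ZMod q) - (n : ZMod q) ^ k.val ≠ 0 := sub_ne_zero.mpr (Ne.symm hne1)
        refine isConj_iff.mpr
          ⟨MS.mk ((l' - l) * ((1 : ZMod q) - (n : ZMod q) ^ k.val)⁻¹) 0, ?_⟩
        rw [show (((l, k) : ZMod q × ZMod p) : MS p q n) = MS.mk l k from rfl, MSAux.conj_eq]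
        refine Prod.ext ?_ rfl
        show (1 - (n : ZMod q) ^ k.val) *
            ((l' - l) * ((1 : ZMod q) - (n : ZMod q) ^ k.val)⁻¹) +
            (n : ZMod q) ^ (0 : ZMod p).val * l = l'
        rw [ZMod.val_zero, pow_zero, one_mul]
        have hcalc : ((1 : ZMod q) - (n : ZMod q) ^ k.val) *
            ((l' - l) * ((1 : ZMod q) - (n : ZMod q) ^ k.val)⁻¹) = l' - l := by
          field_simp
        rw [hcalc]
        ring
    · rintro (z | ⟨k, hk⟩)
      · induction z using Quotient.ind with
        | _ l =>
          exact ⟨ConjClasses.mk (MS.mk l 0),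
            (hF (MS.mk l 0)).trans (MSAux.Phi_zero p q n hppos h1 l)⟩
      · exact ⟨ConjClasses.mk (MS.mk 0 k),
          (hF (MS.mk 0 k)).trans (MSAux.Phi_ne p q n hppos h1 0 hk)⟩
  have hcard : Nat.card (ConjClasses (MS p q n)) =
      Nat.card (Quotient (MSAux.nSetoid p q n hppos h1) ⊕ {k : ZMod p // k ≠ 0}) :=
    Nat.card_congr (Equiv.ofBijective F hbij)
  have hQ : Nat.card (Quotient (MSAux.nSetoid p q n hppos h1)) = (q - 1) / p + 1 :=
    MSAux.card_quotient_nSetoid p q n hppos hord h1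
  have hsub : Nat.card {k : ZMod p // k ≠ 0} = p - 1 := by
    rw [Nat.card_eq_fintype_card]
    have h2 := Fintype.card_subtype_compl (fun k : ZMod p => k = 0)
    simp only [Fintype.card_subtype_eq, ZMod.card] at h2
    convert h2 using 2
  rw [hcard, Nat.card_sum, hQ, hsub]
  omega
end

section
/- For every integer u, the function ω^u is a 3-cocycle on G with values in ℂˣ (with trivial G-action): for all g, h, k, l ∈ G one has ω^u(h,k,l) · ω^u(g,hk,l) · ω^u(g,h,k) = ω^u(gh,k,l) · ω^u(g,h,kl). -/
namespace MS

variable {p q n : ℕ}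

/-- The 3-cochain `ω^u` on `G = ℤ_q ⋊_n ℤ_p`:
`ω^u(g,h,k) = exp((2πi u / p²) · [i_k]_p · ([i_g]_p + [i_h]_p − [i_g + i_h]_p))`,
where `i_g` denotes the `ℤ/pℤ`-component of `g` and `[·]_p` its least nonnegative
residue in `{0,…,p−1}`. -/
noncomputable def omega (u : ℤ) (g h k : MS p q n) : ℂ :=
  Complex.exp (2 * Real.pi * Complex.I * u / (p : ℂ) ^ 2 *
    (((MS.snd k).val : ℂ) *
      (((MS.snd g).val : ℂ) + ((MS.snd h).val : ℂ) - ((MS.snd g + MS.snd h).val : ℂ))))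

end MS

lemma aux_dvd {p : ℕ} [NeZero p] (a b : ZMod p) :
    ∃ s : ℤ, (a.val : ℤ) + b.val - (a + b).val = p * s := by
  refine ⟨((a.val + b.val) / p : ℕ), ?_⟩
  have h1 : (a + b).val = (a.val + b.val) % p := ZMod.val_add a b
  have h2 := Nat.mod_add_div (a.val + b.val) p
  have h3 : a.val + b.val = (a + b).val + p * ((a.val + b.val) / p) := by omega
  have h4 := congrArg (Nat.cast : ℕ → ℤ) h3
  rw [Nat.cast_add, Nat.cast_add, Nat.cast_mul] at h4
  linarith

/-- For every integer `u`, the function `ω^u` is a 3-cocycle on `G = ℤ_q ⋊_n ℤ_p`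
with values in `ℂˣ` (trivial `G`-action): for all `g, h, k, l ∈ G`,
`ω^u(h,k,l) · ω^u(g,hk,l) · ω^u(g,h,k) = ω^u(gh,k,l) · ω^u(g,h,kl)`. -/
theorem omega_is_three_cocycle (p q n : ℕ) [Fact p.Prime] [Fact q.Prime]
    (hp : Odd p) (hq : Odd q) (hpq : p ∣ q - 1)
    [Fact (orderOf (n : ZMod q) = p)] :
    ∀ (u : ℤ) (g h k l : MS p q n),
      MS.omega u h k l * MS.omega u g (h * k) l * MS.omega u g h k =
        MS.omega u (g * h) k l * MS.omega u g h (k * l) := by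
  intro u g h k l
  have hp0 : (p : ℂ) ≠ 0 := Nat.cast_ne_zero.mpr (NeZero.ne p)
  obtain ⟨s, hs⟩ := aux_dvd (MS.snd k) (MS.snd l)
  obtain ⟨t, ht⟩ := aux_dvd (MS.snd g) (MS.snd h)
  have hsnd1 : MS.snd (h * k) = MS.snd h + MS.snd k := rfl
  have hsnd2 : MS.snd (g * h) = MS.snd g + MS.snd h := rfl
  have hsnd3 : MS.snd (k * l) = MS.snd k + MS.snd l := rfl
  unfold MS.omega
  rw [hsnd1, hsnd2, hsnd3, ← Complex.exp_add, ← Complex.exp_add, ← Complex.exp_add,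
    Complex.exp_eq_exp_iff_exists_int]
  refine ⟨u * s * t, ?_⟩
  set C : ℂ := 2 * Real.pi * Complex.I * u / (p : ℂ) ^ 2 with hC
  have hCp : C * (p : ℂ) ^ 2 = 2 * Real.pi * Complex.I * u := by
    rw [hC, div_mul_cancel₀]
    exact pow_ne_zero 2 hp0
  -- cocycle identity for the carry cochain, cast to ℂ
  have hcoc : (((MS.snd h).val : ℂ) + ((MS.snd k).val : ℂ)
        - (((MS.snd h + MS.snd k).val : ℂ)))
      + (((MS.snd g).val : ℂ) + ((MS.snd h + MS.snd k).val : ℂ)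
        - (((MS.snd g + (MS.snd h + MS.snd k)).val : ℂ)))
      = ((((MS.snd g + MS.snd h).val : ℂ)) + ((MS.snd k).val : ℂ)
        - (((MS.snd g + MS.snd h + MS.snd k).val : ℂ)))
      + (((MS.snd g).val : ℂ) + ((MS.snd h).val : ℂ)
        - (((MS.snd g + MS.snd h).val : ℂ))) := by
    rw [add_assoc]
    ring
  have hsC : ((MS.snd k).val : ℂ) + ((MS.snd l).val : ℂ)
      - ((MS.snd k + MS.snd l).val : ℂ) = (p : ℂ) * s := by
    exact_mod_cast congrArg (Int.cast : ℤ → ℂ) hs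
  have htC : ((MS.snd g).val : ℂ) + ((MS.snd h).val : ℂ)
      - ((MS.snd g + MS.snd h).val : ℂ) = (p : ℂ) * t := by
    exact_mod_cast congrArg (Int.cast : ℤ → ℂ) ht
  push_cast
  linear_combination (C * ((MS.snd l).val : ℂ)) * hcoc
    + (C * (((MS.snd g).val : ℂ) + ((MS.snd h).val : ℂ)
        - ((MS.snd g + MS.snd h).val : ℂ))) * hsC
    + (C * (p : ℂ) * s) * htC + ((s : ℂ) * t) * hCp
end

section
/- For all t, x, y ∈ G, the projective 2-cochain θ^u_t(x,y) := ω^u(t,x,y) · ω^u(x,y,(xy)⁻¹ t (xy)) / ω^u(x, x⁻¹ t x, y) satisfies θ^u_t(x,y) = ω^u(x,y,t). In particular θ^u_t(x,y) depends only on the ℤ/pℤ-components of t, x and y, equals 1 when [i_x]_p + [i_y]_p < p, and equals exp(2πi u [i_t]_p / p) when [i_x]_p + [i_y]_p ≥ p. -/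
namespace MS

/-- The projective 2-cochain `θ^u_t(x,y) = ω^u(t,x,y)·ω^u(x,y,(xy)⁻¹t(xy)) / ω^u(x,x⁻¹tx,y)`. -/
noncomputable def theta {p q n : ℕ} [NeZero p] [Fact (orderOf (n : ZMod q) = p)]
    (u : ℤ) (t x y : MS p q n) : ℂ :=
  omega u t x y * omega u x y ((x * y)⁻¹ * t * (x * y)) / omega u x (x⁻¹ * t * x) y

end MS

namespace MS

variable {p q n : ℕ} [NeZero p] [Fact (orderOf (n : ZMod q) = p)]

lemma snd_mul' (g h : MS p q n) : MS.snd (g * h) = MS.snd g + MS.snd h := rfl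

lemma snd_inv' (g : MS p q n) : MS.snd g⁻¹ = - MS.snd g := rfl

lemma snd_conj' (g t : MS p q n) : MS.snd (g⁻¹ * t * g) = MS.snd t := by
  simp [snd_mul', snd_inv']

lemma theta_eq' (u : ℤ) (t x y : MS p q n) :
    MS.theta u t x y = MS.omega u x y t := by
  have h1 : MS.snd ((x * y)⁻¹ * t * (x * y)) = MS.snd t := snd_conj' _ _
  have h2 : MS.snd (x⁻¹ * t * x) = MS.snd t := snd_conj' _ _
  simp only [MS.theta, MS.omega, h1, h2]
  rw [← Complex.exp_add, ← Complex.exp_sub]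
  congr 1
  rw [add_comm (MS.snd x) (MS.snd t)]
  ring

end MS

/-- For all `t, x, y ∈ G`, `θ^u_t(x,y) = ω^u(x,y,t)`. In particular `θ^u_t(x,y)`
depends only on the `ℤ/pℤ`-components of `t`, `x` and `y`, equals `1` when
`[i_x]_p + [i_y]_p < p`, and equals `exp(2πi u [i_t]_p / p)` when
`[i_x]_p + [i_y]_p ≥ p`. -/
theorem theta_eq_omega (p q n : ℕ) [Fact p.Prime] [Fact q.Prime]
    (hp : Odd p) (hq : Odd q) (hpq : p ∣ q - 1)
    [Fact (orderOf (n : ZMod q) = p)] :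
    ∀ (u : ℤ) (t x y : MS p q n),
      MS.theta u t x y = MS.omega u x y t ∧
      (∀ t' x' y' : MS p q n, MS.snd t' = MS.snd t → MS.snd x' = MS.snd x →
        MS.snd y' = MS.snd y → MS.theta u t' x' y' = MS.theta u t x y) ∧
      ((MS.snd x).val + (MS.snd y).val < p → MS.theta u t x y = 1) ∧
      (p ≤ (MS.snd x).val + (MS.snd y).val →
        MS.theta u t x y =
          Complex.exp (2 * Real.pi * Complex.I * u * ((MS.snd t).val : ℂ) / (p : ℂ))) := by
  
  intro u t x y
  have hp0 : (p:ℂ) ≠ 0 := Nat.cast_ne_zero.mpr (NeZero.ne p)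
  refine ⟨MS.theta_eq' u t x y, ?_, ?_, ?_⟩
  · intro t' x' y' ht hx hy
    rw [MS.theta_eq', MS.theta_eq', MS.omega, MS.omega, ht, hx, hy]
  · intro h
    have hv : (MS.snd x + MS.snd y).val = (MS.snd x).val + (MS.snd y).val := by
      rw [ZMod.val_add, Nat.mod_eq_of_lt h]
    rw [MS.theta_eq', MS.omega, hv]
    push_cast
    ring_nf
    exact Complex.exp_zero
  · intro h
    have hvx := ZMod.val_lt (MS.snd x)
    have hvy := ZMod.val_lt (MS.snd y)
    have hv : (MS.snd x + MS.snd y).val = (MS.snd x).val + (MS.snd y).val - p := by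
      rw [ZMod.val_add, Nat.mod_eq_sub_mod h, Nat.mod_eq_of_lt (by omega)]
    rw [MS.theta_eq', MS.omega, hv]
    congr 1
    rw [Nat.cast_sub h]
    push_cast
    field_simp
    ring
end
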